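/- Let Ω ⊆ ℝ^d be measurable with Lebesgue measure. Let ψ, φ : Ω → ℂ be differentiable with gradients ∇ψ, ∇φ, and let A : Ω → ℝ^d be measurable. Assume ∇ψ, ∇φ ∈ L²(Ω; ℂ^d), ψ, φ ∈ L²(Ω) ∩ L³(Ω) ∩ L⁶(Ω), A ∈ L⁶(Ω; ℝ^d), and that the integrand of B(A; ψ, φ) is integrable. Then |B(A; ψ, φ)| ≤ ‖∇ψ‖_{L²}·‖∇φ‖_{L²} + ‖A‖²_{L⁶}·‖ψ‖_{L⁶}·‖φ‖_{L²} + ‖A‖_{L⁶}·( ‖ψ‖_{L³}·‖∇φ‖_{L²} + ‖∇ψ‖_{L²}·‖φ‖_{L³} ). -/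

import Mathlib

/-!
Write the integrand as `⟨U, V⟩` with `U = i∇ψ + ψA`, `V = i∇φ + φA`. Cauchy–Schwarz and the triangle
inequality give `|⟨U, V⟩| ≤ (|∇ψ| + |ψ||A|)(|∇φ| + |φ||A|)` pointwise. Expanding the product leaves
four terms `|∇ψ||∇φ|`, `|A|²|ψ||φ|`, `|A||ψ||∇φ|`, `|A||∇ψ||φ|`, which Hölder's inequality bounds
with the exponents `(2, 2)`, `(6, 6, 6, 2)`, `(6, 3, 2)` and `(6, 2, 3)`.
-/

open Complex ComplexConjugate MeasureTheory

noncomputable section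

/-- The `j`-th component of the gradient of `f` on `Ω` (from the Fréchet derivative). -/
def gradW {d : ℕ} (Ω : Set (EuclideanSpace ℝ (Fin d)))
    (f : EuclideanSpace ℝ (Fin d) → ℂ) (x : EuclideanSpace ℝ (Fin d)) (j : Fin d) : ℂ :=
  fderivWithin ℝ f Ω x (EuclideanSpace.single j 1)

/-- The integrand `⟨i∇ψ + ψA, i∇φ + φA⟩` of the magnetic form `B(A; ψ, φ)`. -/
def Bint {d : ℕ} (Ω : Set (EuclideanSpace ℝ (Fin d)))
    (A : EuclideanSpace ℝ (Fin d) → Fin d → ℝ)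
    (ψ φ : EuclideanSpace ℝ (Fin d) → ℂ) (x : EuclideanSpace ℝ (Fin d)) : ℂ :=
  ∑ j, (Complex.I * gradW Ω ψ x j + ψ x * (A x j : ℂ))
      * conj (Complex.I * gradW Ω φ x j + φ x * (A x j : ℂ))

/-- The magnetic sesquilinear form `B(A; ψ, φ) = ∫_Ω ⟨i∇ψ + ψA, i∇φ + φA⟩ dx`. -/
def Bform {d : ℕ} (Ω : Set (EuclideanSpace ℝ (Fin d)))
    (A : EuclideanSpace ℝ (Fin d) → Fin d → ℝ)
    (ψ φ : EuclideanSpace ℝ (Fin d) → ℂ) : ℂ :=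
  ∫ x in Ω, Bint Ω A ψ φ x

open scoped ENNReal InnerProductSpace
open ENNReal (HolderTriple)

section LpBounds

variable {X : Type*} [MeasurableSpace X] {μ : Measure X}

theorem norm_integral_le_lpNorm_one {E : Type*} [NormedAddCommGroup E] [NormedSpace ℝ E]
    (f : X → E) : ‖∫ x, f x ∂μ‖ ≤ lpNorm f 1 μ := by
  by_cases hf : AEStronglyMeasurable f μ
  · rw [lpNorm_one_eq_integral_norm hf]
    exact norm_integral_le_integral_norm f
  · simp [integral_non_aestronglyMeasurable hf]

section Holder

variable {𝕜 : Type*} [NormedRing 𝕜] {p q r s t : ℝ≥0∞} {f g h : X → 𝕜}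

theorem lpNorm_mul_le [HolderTriple p q r] (hf : MemLp f p μ) (hg : MemLp g q μ) :
    lpNorm (f * g) r μ ≤ lpNorm f p μ * lpNorm g q μ := by
  rw [← toReal_eLpNorm hf.1, ← toReal_eLpNorm hg.1, ← toReal_eLpNorm (hf.1.mul hg.1),
    ← ENNReal.toReal_mul]
  exact ENNReal.toReal_mono (ENNReal.mul_ne_top hf.eLpNorm_ne_top hg.eLpNorm_ne_top)
    (eLpNorm_smul_le_mul_eLpNorm (φ := f) hg.1 hf.1)

theorem lpNorm_mul_mul_le [HolderTriple q r s] [HolderTriple p s t]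
    (hf : MemLp f p μ) (hg : MemLp g q μ) (hh : MemLp h r μ) :
    lpNorm (f * (g * h)) t μ ≤ lpNorm f p μ * (lpNorm g q μ * lpNorm h r μ) :=
  (lpNorm_mul_le hf (hh.mul (r := s) hg)).trans
    (mul_le_mul_of_nonneg_left (lpNorm_mul_le hg hh) lpNorm_nonneg)

end Holder

theorem norm_integral_le_of_norm_le_add_mul_mul_add_mul {E : Type*} [NormedAddCommGroup E]
    [NormedSpace ℝ E] {F : X → E} {g₁ g₂ a p q : X → ℝ}
    (hg₁ : MemLp g₁ 2 μ) (hg₂ : MemLp g₂ 2 μ) (ha : MemLp a 6 μ) (hp₆ : MemLp p 6 μ)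
    (hp₃ : MemLp p 3 μ) (hq₂ : MemLp q 2 μ) (hq₃ : MemLp q 3 μ)
    (hF : ∀ x, ‖F x‖ ≤ (g₁ x + p x * a x) * (g₂ x + q x * a x)) :
    ‖∫ x, F x ∂μ‖ ≤ lpNorm g₁ 2 μ * lpNorm g₂ 2 μ
      + lpNorm a 6 μ ^ 2 * lpNorm p 6 μ * lpNorm q 2 μ
      + lpNorm a 6 μ * (lpNorm p 3 μ * lpNorm g₂ 2 μ + lpNorm g₁ 2 μ * lpNorm q 3 μ) := by
  obtain ⟨_, _, _, _⟩ : HolderTriple 6 2 (3 / 2) ∧ HolderTriple 6 (3 / 2) (6 / 5) ∧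
      HolderTriple 3 2 (6 / 5) ∧ HolderTriple 6 (6 / 5) 1 := by
    refine ⟨⟨?_⟩, ⟨?_⟩, ⟨?_⟩, ⟨?_⟩⟩ <;>
      rw [← ENNReal.toReal_eq_toReal_iff' (by simp) (by simp)] <;> norm_num [ENNReal.toReal_add]
  have ht₁ : MemLp (g₁ * g₂) 1 μ := hg₂.mul hg₁
  have ht₂ : MemLp (a * (a * (p * q))) 1 μ :=
    ((hq₂.mul (r := 3 / 2) hp₆).mul (r := 6 / 5) ha).mul ha
  have ht₃ : MemLp (a * (p * g₂)) 1 μ := (hg₂.mul (r := 6 / 5) hp₃).mul ha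
  have ht₄ : MemLp (a * (g₁ * q)) 1 μ := (hq₃.mul (r := 6 / 5) hg₁).mul ha
  calc ‖∫ x, F x ∂μ‖
      ≤ lpNorm F 1 μ := norm_integral_le_lpNorm_one F
    _ ≤ lpNorm (g₁ * g₂ + a * (a * (p * q)) + a * (p * g₂) + a * (g₁ * q)) 1 μ :=
        lpNorm_mono_real (((ht₁.add ht₂).add ht₃).add ht₄) fun x =>
          (hF x).trans_eq (by simp only [Pi.add_apply, Pi.mul_apply]; ring)
    _ ≤ lpNorm (g₁ * g₂) 1 μ + lpNorm (a * (a * (p * q))) 1 μ + lpNorm (a * (p * g₂)) 1 μ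
          + lpNorm (a * (g₁ * q)) 1 μ := by
        grw [lpNorm_add_le ((ht₁.add ht₂).add ht₃) le_rfl, lpNorm_add_le (ht₁.add ht₂) le_rfl,
          lpNorm_add_le ht₁ le_rfl]
    _ ≤ lpNorm g₁ 2 μ * lpNorm g₂ 2 μ
          + lpNorm a 6 μ * (lpNorm a 6 μ * (lpNorm p 6 μ * lpNorm q 2 μ))
          + lpNorm a 6 μ * (lpNorm p 3 μ * lpNorm g₂ 2 μ)
          + lpNorm a 6 μ * (lpNorm g₁ 2 μ * lpNorm q 3 μ) := by
        gcongr
        · exact lpNorm_mul_le hg₁ hg₂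
        · exact (lpNorm_mul_le ha ((hq₂.mul (r := 3 / 2) hp₆).mul (r := 6 / 5) ha)).trans
            (mul_le_mul_of_nonneg_left (lpNorm_mul_mul_le (s := 3 / 2) ha hp₆ hq₂) lpNorm_nonneg)
        · exact lpNorm_mul_mul_le (s := 6 / 5) ha hp₃ hg₂
        · exact lpNorm_mul_mul_le (s := 6 / 5) ha hg₁ hq₃
    _ = _ := by ring

variable {f : X → ℝ}

theorem aestronglyMeasurable_of_pow (hf : 0 ≤ f) {n : ℕ} (hn : n ≠ 0)
    (h : AEStronglyMeasurable (fun x => f x ^ n) μ) : AEStronglyMeasurable f μ := by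
  have hroot : f = fun x => (f x ^ n) ^ (n⁻¹ : ℝ) :=
    funext fun x => (Real.pow_rpow_inv_natCast (hf x) hn).symm
  rw [hroot]
  exact (Real.continuous_rpow_const (by positivity)).comp_aestronglyMeasurable h

theorem memLp_of_integrable_pow (hf : 0 ≤ f) {n : ℕ} (hn : n ≠ 0)
    (h : Integrable (fun x => f x ^ n) μ) : MemLp f n μ := by
  rw [← integrable_norm_rpow_iff (aestronglyMeasurable_of_pow hf hn h.1) (by simpa) (by simp)]
  simpa [Real.norm_of_nonneg (hf _)] using h

theorem lpNorm_eq_integral_pow (hf : 0 ≤ f) (hm : AEStronglyMeasurable f μ) (n : ℕ)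
    [n.AtLeastTwo] :
    lpNorm f ofNat(n) μ = (∫ x, f x ^ (ofNat(n) : ℕ) ∂μ) ^ ((1 : ℝ) / ofNat(n)) := by
  rw [lpNorm_eq_integral_norm_rpow_toReal (by simp) (by simp) hm]
  simp [Real.norm_of_nonneg (hf _), one_div]

theorem memLp_sqrt_two_of_integrable (hf : 0 ≤ f) (h : Integrable f μ) :
    MemLp (fun x => √(f x)) 2 μ :=
  memLp_of_integrable_pow (fun _ => Real.sqrt_nonneg _) two_ne_zero
    (h.congr (ae_of_all _ fun x => (Real.sq_sqrt (hf x)).symm))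

theorem lpNorm_sqrt_two_eq (hf : 0 ≤ f) (hm : AEStronglyMeasurable f μ) :
    lpNorm (fun x => √(f x)) 2 μ = (∫ x, f x ∂μ) ^ ((1 : ℝ) / 2) := by
  rw [lpNorm_eq_integral_pow (fun _ => Real.sqrt_nonneg _)
    (Real.continuous_sqrt.comp_aestronglyMeasurable hm)]
  simp [Real.sq_sqrt (hf _)]

end LpBounds

section MagneticGradient

variable {d : ℕ} (Ω : Set (EuclideanSpace ℝ (Fin d))) (A : EuclideanSpace ℝ (Fin d) → Fin d → ℝ)

def magneticGrad (f : EuclideanSpace ℝ (Fin d) → ℂ) (x : EuclideanSpace ℝ (Fin d)) :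
    EuclideanSpace ℂ (Fin d) :=
  WithLp.toLp 2 fun j => Complex.I * gradW Ω f x j + f x * (A x j : ℂ)

theorem Bint_eq_inner_magneticGrad (ψ φ : EuclideanSpace ℝ (Fin d) → ℂ)
    (x : EuclideanSpace ℝ (Fin d)) :
    Bint Ω A ψ φ x = ⟪magneticGrad Ω A φ x, magneticGrad Ω A ψ x⟫_ℂ := by
  simp only [Bint, magneticGrad, PiLp.inner_apply, RCLike.inner_apply]

theorem norm_magneticGrad_le (f : EuclideanSpace ℝ (Fin d) → ℂ) (x : EuclideanSpace ℝ (Fin d)) :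
    ‖magneticGrad Ω A f x‖
      ≤ √(∑ j, Complex.normSq (gradW Ω f x j)) + ‖f x‖ * √(∑ j, (A x j) ^ 2) := by
  have hsplit : magneticGrad Ω A f x
      = Complex.I • WithLp.toLp 2 (gradW Ω f x)
        + f x • WithLp.toLp 2 (fun j => (A x j : ℂ)) := by
    ext j
    simp [magneticGrad]
  rw [hsplit]
  refine (norm_add_le _ _).trans_eq ?_
  simp [norm_smul, EuclideanSpace.norm_eq, Complex.sq_norm]

theorem norm_Bint_le (ψ φ : EuclideanSpace ℝ (Fin d) → ℂ) (x : EuclideanSpace ℝ (Fin d)) :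
    ‖Bint Ω A ψ φ x‖
      ≤ (√(∑ j, Complex.normSq (gradW Ω ψ x j)) + ‖ψ x‖ * √(∑ j, (A x j) ^ 2))
        * (√(∑ j, Complex.normSq (gradW Ω φ x j)) + ‖φ x‖ * √(∑ j, (A x j) ^ 2)) := by
  rw [Bint_eq_inner_magneticGrad, mul_comm]
  exact (norm_inner_le_norm _ _).trans (mul_le_mul (norm_magneticGrad_le Ω A φ x)
    (norm_magneticGrad_le Ω A ψ x) (norm_nonneg _) (by positivity))

end MagneticGradient

theorem stmt11_general (d : ℕ) (Ω : Set (EuclideanSpace ℝ (Fin d)))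
    (ψ φ : EuclideanSpace ℝ (Fin d) → ℂ)
    (A : EuclideanSpace ℝ (Fin d) → Fin d → ℝ)
    (hGψ : Integrable (fun x => ∑ j, Complex.normSq (gradW Ω ψ x j)) (volume.restrict Ω))
    (hGφ : Integrable (fun x => ∑ j, Complex.normSq (gradW Ω φ x j)) (volume.restrict Ω))
    (hψ3 : Integrable (fun x => ‖ψ x‖ ^ (3 : ℕ)) (volume.restrict Ω))
    (hψ6 : Integrable (fun x => ‖ψ x‖ ^ (6 : ℕ)) (volume.restrict Ω))
    (hφ2 : Integrable (fun x => ‖φ x‖ ^ (2 : ℕ)) (volume.restrict Ω))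
    (hφ3 : Integrable (fun x => ‖φ x‖ ^ (3 : ℕ)) (volume.restrict Ω))
    (hA6 : Integrable (fun x => Real.sqrt (∑ j, (A x j) ^ 2) ^ (6 : ℕ)) (volume.restrict Ω)) :
    ‖Bform Ω A ψ φ‖
      ≤ (∫ x in Ω, ∑ j, Complex.normSq (gradW Ω ψ x j)) ^ ((1 : ℝ) / 2)
          * (∫ x in Ω, ∑ j, Complex.normSq (gradW Ω φ x j)) ^ ((1 : ℝ) / 2)
        + ((∫ x in Ω, Real.sqrt (∑ j, (A x j) ^ 2) ^ (6 : ℕ)) ^ ((1 : ℝ) / 6)) ^ (2 : ℕ)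
          * (∫ x in Ω, ‖ψ x‖ ^ (6 : ℕ)) ^ ((1 : ℝ) / 6)
          * (∫ x in Ω, ‖φ x‖ ^ (2 : ℕ)) ^ ((1 : ℝ) / 2)
        + (∫ x in Ω, Real.sqrt (∑ j, (A x j) ^ 2) ^ (6 : ℕ)) ^ ((1 : ℝ) / 6)
          * ((∫ x in Ω, ‖ψ x‖ ^ (3 : ℕ)) ^ ((1 : ℝ) / 3)
              * (∫ x in Ω, ∑ j, Complex.normSq (gradW Ω φ x j)) ^ ((1 : ℝ) / 2)
            + (∫ x in Ω, ∑ j, Complex.normSq (gradW Ω ψ x j)) ^ ((1 : ℝ) / 2)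
              * (∫ x in Ω, ‖φ x‖ ^ (3 : ℕ)) ^ ((1 : ℝ) / 3)) := by
  have hGψ₀ : 0 ≤ fun x => ∑ j, Complex.normSq (gradW Ω ψ x j) :=
    fun x => Finset.sum_nonneg fun j _ => Complex.normSq_nonneg _
  have hGφ₀ : 0 ≤ fun x => ∑ j, Complex.normSq (gradW Ω φ x j) :=
    fun x => Finset.sum_nonneg fun j _ => Complex.normSq_nonneg _
  have ha := memLp_of_integrable_pow (fun _ => Real.sqrt_nonneg _) (by norm_num) hA6
  have hψ₃ := memLp_of_integrable_pow (fun x => norm_nonneg (ψ x)) (by norm_num) hψ3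
  have hψ₆ := memLp_of_integrable_pow (fun x => norm_nonneg (ψ x)) (by norm_num) hψ6
  have hφ₂ := memLp_of_integrable_pow (fun x => norm_nonneg (φ x)) (by norm_num) hφ2
  have hφ₃ := memLp_of_integrable_pow (fun x => norm_nonneg (φ x)) (by norm_num) hφ3
  have key := norm_integral_le_of_norm_le_add_mul_mul_add_mul
    (memLp_sqrt_two_of_integrable hGψ₀ hGψ) (memLp_sqrt_two_of_integrable hGφ₀ hGφ)
    ha hψ₆ hψ₃ hφ₂ hφ₃ (norm_Bint_le Ω A ψ φ)
  rwa [lpNorm_sqrt_two_eq hGψ₀ hGψ.1, lpNorm_sqrt_two_eq hGφ₀ hGφ.1,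
    lpNorm_eq_integral_pow (fun _ => Real.sqrt_nonneg _) ha.1,
    lpNorm_eq_integral_pow (fun x => norm_nonneg (ψ x)) hψ₆.1,
    lpNorm_eq_integral_pow (fun x => norm_nonneg (ψ x)) hψ₃.1,
    lpNorm_eq_integral_pow (fun x => norm_nonneg (φ x)) hφ₂.1,
    lpNorm_eq_integral_pow (fun x => norm_nonneg (φ x)) hφ₃.1] at key

/-- The continuity bound (4.7):
`|B(A; ψ, φ)| ≤ ‖∇ψ‖_{L²}‖∇φ‖_{L²} + ‖A‖²_{L⁶}‖ψ‖_{L⁶}‖φ‖_{L²}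
  + ‖A‖_{L⁶}(‖ψ‖_{L³}‖∇φ‖_{L²} + ‖∇ψ‖_{L²}‖φ‖_{L³})`. -/
theorem stmt11 (d : ℕ) (Ω : Set (EuclideanSpace ℝ (Fin d))) (hΩ : MeasurableSet Ω)
    (ψ φ : EuclideanSpace ℝ (Fin d) → ℂ)
    (A : EuclideanSpace ℝ (Fin d) → Fin d → ℝ)
    (hψd : DifferentiableOn ℝ ψ Ω) (hφd : DifferentiableOn ℝ φ Ω) (hA : Measurable A)
    (hGψ : Integrable (fun x => ∑ j, Complex.normSq (gradW Ω ψ x j)) (volume.restrict Ω))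
    (hGφ : Integrable (fun x => ∑ j, Complex.normSq (gradW Ω φ x j)) (volume.restrict Ω))
    (hψ2 : Integrable (fun x => ‖ψ x‖ ^ (2 : ℕ)) (volume.restrict Ω))
    (hψ3 : Integrable (fun x => ‖ψ x‖ ^ (3 : ℕ)) (volume.restrict Ω))
    (hψ6 : Integrable (fun x => ‖ψ x‖ ^ (6 : ℕ)) (volume.restrict Ω))
    (hφ2 : Integrable (fun x => ‖φ x‖ ^ (2 : ℕ)) (volume.restrict Ω))
    (hφ3 : Integrable (fun x => ‖φ x‖ ^ (3 : ℕ)) (volume.restrict Ω))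
    (hφ6 : Integrable (fun x => ‖φ x‖ ^ (6 : ℕ)) (volume.restrict Ω))
    (hA6 : Integrable (fun x => Real.sqrt (∑ j, (A x j) ^ 2) ^ (6 : ℕ)) (volume.restrict Ω))
    (hB : Integrable (Bint Ω A ψ φ) (volume.restrict Ω)) :
    ‖Bform Ω A ψ φ‖
      ≤ (∫ x in Ω, ∑ j, Complex.normSq (gradW Ω ψ x j)) ^ ((1 : ℝ) / 2)
          * (∫ x in Ω, ∑ j, Complex.normSq (gradW Ω φ x j)) ^ ((1 : ℝ) / 2)
        + ((∫ x in Ω, Real.sqrt (∑ j, (A x j) ^ 2) ^ (6 : ℕ)) ^ ((1 : ℝ) / 6)) ^ (2 : ℕ)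
          * (∫ x in Ω, ‖ψ x‖ ^ (6 : ℕ)) ^ ((1 : ℝ) / 6)
          * (∫ x in Ω, ‖φ x‖ ^ (2 : ℕ)) ^ ((1 : ℝ) / 2)
        + (∫ x in Ω, Real.sqrt (∑ j, (A x j) ^ 2) ^ (6 : ℕ)) ^ ((1 : ℝ) / 6)
          * ((∫ x in Ω, ‖ψ x‖ ^ (3 : ℕ)) ^ ((1 : ℝ) / 3)
              * (∫ x in Ω, ∑ j, Complex.normSq (gradW Ω φ x j)) ^ ((1 : ℝ) / 2)
            + (∫ x in Ω, ∑ j, Complex.normSq (gradW Ω ψ x j)) ^ ((1 : ℝ) / 2)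
              * (∫ x in Ω, ‖φ x‖ ^ (3 : ℕ)) ^ ((1 : ℝ) / 3)) :=
  stmt11_general d Ω ψ φ A hGψ hGφ hψ3 hψ6 hφ2 hφ3 hA6

end
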